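/- If A is an infinite matrix mapping ℓ_∞(F̂) into c_0 (or into c, the convergent sequences), then the induced operator L_A : ℓ_∞(F̂) → c_0 (resp. c) is compact. -/

import Mathlib

open scoped BigOperators ENNReal
open Filter Topology

noncomputable def fibr (n : ℕ) : ℝ := (Nat.fib (n + 1) : ℝ)

lemma fibr_pos (n : ℕ) : 0 < fibr n := by
  simpa [fibr] using Nat.cast_pos.mpr (Nat.fib_pos.mpr (Nat.succ_pos n))

noncomputable def Fhat (x : ℕ → ℝ) : ℕ → ℝ
  | 0 => x 0
  | (n + 1) => fibr (n + 1) / fibr (n + 2) * x (n + 1) - fibr (n + 2) / fibr (n + 1) * x n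

lemma Fhat_add (x y : ℕ → ℝ) : Fhat (x + y) = Fhat x + Fhat y := by
  funext n; cases n <;> simp [Fhat] <;> ring

lemma Fhat_smul (c : ℝ) (x : ℕ → ℝ) : Fhat (c • x) = c • Fhat x := by
  funext n; cases n <;> simp [Fhat] <;> ring

noncomputable def FhatL : (ℕ → ℝ) →ₗ[ℝ] (ℕ → ℝ) where
  toFun := Fhat
  map_add' := Fhat_add
  map_smul' := Fhat_smul

lemma Fhat_inj : Function.Injective Fhat := by
  have h0 : ∀ x : ℕ → ℝ, Fhat x = 0 → x = 0 := by
    intro x hx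
    funext n
    induction n with
    | zero => simpa [Fhat] using congrFun hx 0
    | succ n ih =>
        have h := congrFun hx (n + 1)
        simp only [Fhat, ih, Pi.zero_apply, mul_zero, sub_zero] at h
        have h1 : fibr (n + 1) / fibr (n + 2) ≠ 0 :=
          div_ne_zero (fibr_pos _).ne' (fibr_pos _).ne'
        simpa [Pi.zero_apply] using (mul_eq_zero.mp h).resolve_left h1
  have : Function.Injective FhatL := (injective_iff_map_eq_zero' FhatL).mpr
    (fun x => ⟨fun h => h0 x h, fun h => by simp [FhatL, h]; funext n; cases n <;> simp [Fhat]⟩)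
  exact this

noncomputable def FhatLP : PreLp (fun _ : ℕ => ℝ) →ₗ[ℝ] PreLp (fun _ : ℕ => ℝ) where
  toFun x := Fhat x
  map_add' x y := Fhat_add x y
  map_smul' c x := Fhat_smul c x

noncomputable def ellF (p : ℝ≥0∞) : Submodule ℝ (PreLp (fun _ : ℕ => ℝ)) :=
  (lpSubmodule ℝ (fun _ : ℕ => ℝ) p).comap FhatLP

instance (p : ℝ≥0∞) : CoeOut (ellF p) (ℕ → ℝ) := ⟨fun x => (x : PreLp (fun _ : ℕ => ℝ))⟩

noncomputable def ellFtoLp (p : ℝ≥0∞) : ellF p →ₗ[ℝ] lp (fun _ : ℕ => ℝ) p where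
  toFun x := ⟨Fhat (x : ℕ → ℝ), x.2⟩
  map_add' x y := Subtype.ext (Fhat_add (x : ℕ → ℝ) (y : ℕ → ℝ))
  map_smul' c x := Subtype.ext (Fhat_smul c (x : ℕ → ℝ))

lemma ellFtoLp_inj (p : ℝ≥0∞) : Function.Injective (ellFtoLp p) := by
  intro x y h
  have h2 : Fhat (x : ℕ → ℝ) = Fhat (y : ℕ → ℝ) := congrArg Subtype.val h
  exact Subtype.ext (Fhat_inj h2)

noncomputable instance (p : ℝ≥0∞) [Fact (1 ≤ p)] : NormedAddCommGroup (ellF p) :=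
  NormedAddCommGroup.induced _ _ (ellFtoLp p) (ellFtoLp_inj p)

noncomputable instance (p : ℝ≥0∞) [Fact (1 ≤ p)] : NormedSpace ℝ (ellF p) :=
  NormedSpace.induced _ _ _ (ellFtoLp p)

noncomputable def abar (a : ℕ → ℝ) (k : ℕ) : ℝ :=
  ∑' j : ℕ, (fibr (k + j + 1)) ^ 2 / (fibr k * fibr (k + 1)) * a (k + j)

noncomputable def hmnc {X : Type*} [MetricSpace X] (Q : Set X) : ℝ :=
  sInf {ε : ℝ | 0 < ε ∧ ∃ s : Finset X, Q ⊆ ⋃ x ∈ s, Metric.ball x ε}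



instance factTop : Fact ((1 : ℝ≥0∞) ≤ ∞) := ⟨le_top⟩

/-!
`FhatInv` inverts `Fhat`, so `x ↦ Fhat x` identifies `ℓ_∞(F̂)` isometrically with `ℓ_∞`.
Exchanging the order of summation (absolutely convergent because `∑ 1 / (f_j f_{j+1}) < ∞`)
turns `L` into the matrix `B = (abar (A n) k)` acting on `ℓ_∞`, and `B` maps `ℓ_∞` into `c`.
A gliding-hump argument shows that the rows of such a matrix are Cauchy in `ℓ_1`. Hence, from
some `N` on, the coordinates of `L x` stay within `ε` of the `N`-th one uniformly for `x` in a
bounded set, and the image is totally bounded because the first `N + 1` coordinates range over a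
bounded subset of `ℝ^(N+1)`.
-/

lemma fibr_add_two (n : ℕ) : fibr (n + 2) = fibr n + fibr (n + 1) := by
  simp only [fibr, Nat.fib_add_two, Nat.cast_add]

lemma two_pow_le_fibr_mul_fibr_succ (j : ℕ) : (2 : ℝ) ^ j ≤ fibr j * fibr (j + 1) := by
  induction j with
  | zero => norm_num [fibr]
  | succ j ih =>
    have hmono : fibr j ≤ fibr (j + 1) := by
      unfold fibr; exact_mod_cast Nat.fib_mono (Nat.le_succ _)
    rw [fibr_add_two, pow_succ]
    nlinarith [fibr_pos j]

lemma summable_inv_fibr_mul_fibr_succ : Summable fun j : ℕ => (fibr j * fibr (j + 1))⁻¹ := by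
  refine summable_geometric_two.of_nonneg_of_le
    (fun j => by have := fibr_pos j; have := fibr_pos (j + 1); positivity) fun j => ?_
  rw [one_div, inv_pow]
  exact inv_anti₀ (by positivity) (two_pow_le_fibr_mul_fibr_succ j)

/-- The entries of the lower-triangular inverse of `Fhat`; note that `abar a j` unfolds to
`∑' t, FhatInvCoeff (j + t) j * a (j + t)`. -/
noncomputable def FhatInvCoeff (k j : ℕ) : ℝ := fibr (k + 1) ^ 2 / (fibr j * fibr (j + 1))

noncomputable def FhatInv (y : ℕ → ℝ) (k : ℕ) : ℝ :=
  ∑ j ∈ Finset.range (k + 1), FhatInvCoeff k j * y j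

lemma FhatInv_zero (y : ℕ → ℝ) : FhatInv y 0 = y 0 := by
  simp [FhatInv, FhatInvCoeff, fibr]

lemma FhatInv_succ (y : ℕ → ℝ) (k : ℕ) :
    FhatInv y (k + 1) = (fibr (k + 2) / fibr (k + 1)) ^ 2 * FhatInv y k
      + fibr (k + 2) / fibr (k + 1) * y (k + 1) := by
  have h1 := (fibr_pos (k + 1)).ne'
  have h2 := (fibr_pos (k + 2)).ne'
  rw [FhatInv, Finset.sum_range_succ, FhatInv, Finset.mul_sum]
  congr 1
  · refine Finset.sum_congr rfl fun j _ => ?_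
    have := (fibr_pos j).ne'
    have := (fibr_pos (j + 1)).ne'
    simp only [FhatInvCoeff]
    field_simp
  · simp only [FhatInvCoeff]
    field_simp

lemma Fhat_FhatInv (y : ℕ → ℝ) : Fhat (FhatInv y) = y := by
  funext n
  cases n with
  | zero => exact FhatInv_zero y
  | succ n =>
    have h1 := (fibr_pos (n + 1)).ne'
    have h2 := (fibr_pos (n + 2)).ne'
    simp only [Fhat, FhatInv_succ]
    field_simp
    ring

lemma FhatInv_Fhat (x : ℕ → ℝ) : FhatInv (Fhat x) = x :=
  Fhat_inj (Fhat_FhatInv (Fhat x))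

lemma tsum_sum_range_succ_comm {E : Type*} [NormedAddCommGroup E] [CompleteSpace E]
    {f : ℕ → ℕ → E} (hf : Summable fun p : ℕ × ℕ => ‖f p.1 p.2‖) :
    ∑' k, ∑ j ∈ Finset.range (k + 1), f k j = ∑' j, ∑' t, f (j + t) j := by
  classical
  let g : ℕ → ℕ → E := fun k j => if j ≤ k then f k j else 0
  have hg : Summable (Function.uncurry g) :=
    hf.of_norm_bounded fun p => by
      by_cases h : p.2 ≤ p.1 <;> simp [g, Function.uncurry, h]
  calc ∑' k, ∑ j ∈ Finset.range (k + 1), f k j = ∑' k, ∑' j, g k j := by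
        refine tsum_congr fun k => ?_
        rw [tsum_eq_sum (s := Finset.range (k + 1)) fun j hj => if_neg (by simpa using hj)]
        exact Finset.sum_congr rfl fun j hj => (if_pos (by simpa [Nat.lt_succ_iff] using hj)).symm
    _ = ∑' j, ∑' k, g k j := hg.tsum_comm.symm
    _ = ∑' j, ∑' t, f (j + t) j := by
        refine tsum_congr fun j => ?_
        rw [← (add_right_injective j).tsum_eq fun k hk => ⟨k - j, ?_⟩]
        · exact tsum_congr fun t => if_pos (Nat.le_add_right j t)
        · have : j ≤ k := by by_contra h; exact hk (if_neg h)
          dsimp only; omega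

lemma tsum_mul_FhatInv {a y : ℕ → ℝ} {M : ℝ} (ha : Summable fun k => fibr (k + 1) ^ 2 * |a k|)
    (hy : ∀ k, |y k| ≤ M) : ∑' k, a k * FhatInv y k = ∑' j, abar a j * y j := by
  have hM : 0 ≤ M := (abs_nonneg _).trans (hy 0)
  have hcoeff : ∀ k j, FhatInvCoeff k j = fibr (k + 1) ^ 2 * (fibr j * fibr (j + 1))⁻¹ :=
    fun _ _ => div_eq_mul_inv _ _
  have hprod : Summable fun p : ℕ × ℕ =>
      fibr (p.1 + 1) ^ 2 * |a p.1| * (M * (fibr p.2 * fibr (p.2 + 1))⁻¹) :=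
    ha.mul_of_nonneg (summable_inv_fibr_mul_fibr_succ.mul_left M)
      (fun k => by positivity)
      (fun j => by have := fibr_pos j; have := fibr_pos (j + 1); positivity)
  have hsum := tsum_sum_range_succ_comm (f := fun k j => FhatInvCoeff k j * a k * y j) <| by
    refine hprod.of_nonneg_of_le (fun _ => norm_nonneg _) fun p => ?_
    have := fibr_pos p.2
    have := fibr_pos (p.2 + 1)
    have := fibr_pos (p.1 + 1)
    rw [Real.norm_eq_abs, abs_mul, abs_mul, abs_of_pos (by rw [hcoeff]; positivity), hcoeff]
    calc _ ≤ fibr (p.1 + 1) ^ 2 * (fibr p.2 * fibr (p.2 + 1))⁻¹ * |a p.1| * M := by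
          gcongr; exact hy _
      _ = _ := by ring
  calc ∑' k, a k * FhatInv y k
        = ∑' k, ∑ j ∈ Finset.range (k + 1), FhatInvCoeff k j * a k * y j :=
          tsum_congr fun k => by
            rw [FhatInv, Finset.mul_sum]
            exact Finset.sum_congr rfl fun _ _ => by ring
    _ = ∑' j, ∑' t, FhatInvCoeff (j + t) j * a (j + t) * y j := hsum
    _ = ∑' j, abar a j * y j := tsum_congr fun j => tsum_mul_right

lemma abs_Fhat_le_norm (x : ellF ∞) (k : ℕ) : |Fhat (x : ℕ → ℝ) k| ≤ ‖x‖ :=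
  lp.norm_apply_le_norm ENNReal.top_ne_zero (ellFtoLp ∞ x) k

lemma FhatInv_mem_ellF {p : ℝ≥0∞} {y : ℕ → ℝ} (hy : Memℓp y p) : FhatInv y ∈ ellF p := by
  show Memℓp (Fhat (FhatInv y)) p
  rwa [Fhat_FhatInv]

section BoundedPairing

variable {b y : ℕ → ℝ} {M : ℝ}

lemma summable_mul_of_abs_le (hb : Summable fun k => |b k|) (hy : ∀ k, |y k| ≤ M) :
    Summable fun k => b k * y k :=
  (hb.mul_right M).of_norm_bounded fun k => by
    rw [Real.norm_eq_abs, abs_mul]; exact mul_le_mul_of_nonneg_left (hy k) (abs_nonneg _)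

lemma abs_tsum_mul_le (hb : Summable fun k => |b k|) (hy : ∀ k, |y k| ≤ M) :
    |∑' k, b k * y k| ≤ (∑' k, |b k|) * M :=
  tsum_of_norm_bounded (hb.hasSum.mul_right M) fun k => by
    rw [Real.norm_eq_abs, abs_mul]; exact mul_le_mul_of_nonneg_left (hy k) (abs_nonneg _)

lemma summable_abs_sub {c : ℕ → ℝ} (hb : Summable fun k => |b k|) (hc : Summable fun k => |c k|) :
    Summable fun k => |b k - c k| :=
  (hb.add hc).of_nonneg_of_le (fun _ => abs_nonneg _) fun _ => abs_sub _ _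

lemma tsum_abs_sub_tsum_mul_le (hb : Summable fun k => |b k|) (hy : ∀ k, |y k| ≤ 1) {m n : ℕ}
    (hmn : m ≤ n) (hsign : ∀ k, m ≤ k → k < n → b k * y k = |b k|) :
    ∑' k, |b k| - ∑' k, b k * y k ≤ 2 * (∑ k ∈ Finset.range m, |b k| + ∑' k, |b (k + n)|) := by
  have hby : ∀ k, |b k * y k| ≤ |b k| := fun k => by
    simpa [abs_mul] using mul_le_mul_of_nonneg_left (hy k) (abs_nonneg (b k))
  set h : ℕ → ℝ := fun k => |b k| - b k * y k with h_def
  have hle : ∀ k, h k ≤ 2 * |b k| := fun k => by linarith [neg_abs_le (b k * y k), hby k]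
  have hzero : ∀ k ∈ Finset.Ico m n, h k = 0 := fun k hk => by
    rw [Finset.mem_Ico] at hk
    simp only [h_def, hsign k hk.1 hk.2, sub_self]
  have hh : Summable h := hb.sub (summable_mul_of_abs_le hb hy)
  rw [← hb.tsum_sub (summable_mul_of_abs_le hb hy), ← hh.sum_add_tsum_nat_add n,
    ← Finset.sum_range_add_sum_Ico _ hmn, Finset.sum_eq_zero hzero, add_zero, mul_add,
    Finset.mul_sum, ← tsum_mul_left]
  exact add_le_add (Finset.sum_le_sum fun k _ => hle k)
    (((summable_nat_add_iff n).2 hh).tsum_le_tsum (fun k => hle (k + n))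
      (((summable_nat_add_iff n).2 hb).mul_left 2))

end BoundedPairing

lemma exists_sign_on_blocks (b : ℕ → ℕ → ℝ) {K : ℕ → ℕ} (hK : StrictMono K) :
    ∃ y : ℕ → ℝ, (∀ k, |y k| ≤ 1) ∧ ∀ t k, K t ≤ k → k < K (t + 1) → b t k * y k = |b t k| := by
  classical
  have hblock : ∀ k, ∃ t, k < K (t + 1) := fun k => ⟨k, (Nat.lt_succ_self k).trans_le (hK.id_le _)⟩
  refine ⟨fun k => SignType.sign (b (Nat.find (hblock k)) k), fun k => ?_, fun t k hk hk' => ?_⟩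
  · dsimp only
    generalize SignType.sign (b (Nat.find (hblock k)) k) = s
    cases s <;> simp
  · have : Nat.find (hblock k) = t := by
      refine le_antisymm (Nat.find_min' _ hk') (not_lt.1 fun hlt => ?_)
      exact (Nat.find_spec (hblock k)).not_ge (hk.trans' (hK.monotone hlt))
    simp only [this, self_mul_sign]

/-- Gliding hump: otherwise there are rows `n_t → ∞` of mass `≥ ε` almost concentrated on
disjoint blocks `[K t, K (t + 1))`, and testing them against their signs on these blocks
keeps `∑' k, B (n_t) k * y k ≥ ε / 2`. -/
theorem tendsto_tsum_abs_of_tendsto_tsum_mul {B : ℕ → ℕ → ℝ} (hB : ∀ n, Summable fun k => |B n k|)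
    (h : ∀ y : ℕ → ℝ, (∀ k, |y k| ≤ 1) → Tendsto (fun n => ∑' k, B n k * y k) atTop (𝓝 0)) :
    Tendsto (fun n => ∑' k, |B n k|) atTop (𝓝 0) := by
  classical
  have hcol : ∀ k, Tendsto (fun n => B n k) atTop (𝓝 0) := fun k => by
    have := h (fun j => if j = k then 1 else 0) fun j => by split_ifs <;> simp
    simpa only [mul_ite, mul_one, mul_zero, tsum_ite_eq] using this
  have hhead : ∀ K, Tendsto (fun n => ∑ k ∈ Finset.range K, |B n k|) atTop (𝓝 0) := fun K => by
    simpa using tendsto_finsetSum (Finset.range K) fun k _ => (hcol k).abs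
  refine tendsto_order.2 ⟨fun a ha => Eventually.of_forall fun n =>
    ha.trans_le (tsum_nonneg fun _ => abs_nonneg _), fun ε hε => ?_⟩
  by_contra hfreq
  simp only [not_eventually, not_lt] at hfreq
  have hδ : 0 < ε / 8 := by positivity
  have hstep : ∀ t K, ∃ n, t ≤ n ∧ ∑ k ∈ Finset.range K, |B n k| < ε / 8 ∧
      ε ≤ ∑' k, |B n k| ∧ ∃ K', K < K' ∧ ∑' k, |B n (k + K')| < ε / 8 := by
    intro t K
    obtain ⟨n, hn, hbig, hsmall⟩ :=
      frequently_atTop.1 (hfreq.and_eventually ((hhead K).eventually (gt_mem_nhds hδ))) t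
    obtain ⟨K', hK', htail⟩ := ((eventually_gt_atTop K).and
      ((tendsto_sum_nat_add fun k => |B n k|).eventually (gt_mem_nhds hδ))).exists
    exact ⟨n, hn, hsmall, hbig, K', hK', htail⟩
  choose n hn hsmall hbig K' hK' htail using hstep
  let K : ℕ → ℕ := fun t => Nat.rec 0 (fun t Kt => K' t Kt) t
  have hK : StrictMono K := strictMono_nat_of_lt_succ fun t => hK' t (K t)
  obtain ⟨y, hy, hsign⟩ := exists_sign_on_blocks (fun t k => B (n t (K t)) k) hK
  have hlow : ∀ t, ε / 2 ≤ ∑' k, B (n t (K t)) k * y k := fun t => by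
    have := tsum_abs_sub_tsum_mul_le (hB _) hy (hK.monotone t.le_succ) (hsign t)
    linarith [hsmall t (K t), htail t (K t), hbig t (K t)]
  have hrows : Tendsto (fun t => n t (K t)) atTop atTop :=
    tendsto_atTop_mono (fun t => hn t (K t)) tendsto_id
  linarith [ge_of_tendsto' ((h y hy).comp hrows) hlow]

theorem tendsto_tsum_abs_sub_of_forall_exists_tendsto {B : ℕ → ℕ → ℝ}
    (hB : ∀ n, Summable fun k => |B n k|)
    (h : ∀ y : ℕ → ℝ, (∀ k, |y k| ≤ 1) → ∃ l, Tendsto (fun n => ∑' k, B n k * y k) atTop (𝓝 l)) :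
    Tendsto (fun p : ℕ × ℕ => ∑' k, |B p.1 k - B p.2 k|) atTop (𝓝 0) := by
  refine tendsto_iff_seq_tendsto.2 fun p hp => ?_
  rw [← prod_atTop_atTop_eq] at hp
  refine tendsto_tsum_abs_of_tendsto_tsum_mul (B := fun t k => B (p t).1 k - B (p t).2 k)
    (fun t => summable_abs_sub (hB _) (hB _)) fun y hy => ?_
  obtain ⟨l, hl⟩ := h y hy
  have := (hl.comp (tendsto_fst.comp hp)).sub (hl.comp (tendsto_snd.comp hp))
  rw [sub_self] at this
  refine this.congr fun t => ?_
  simp only [Function.comp_apply, sub_mul]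
  exact ((summable_mul_of_abs_le (hB _) hy).tsum_sub (summable_mul_of_abs_le (hB _) hy)).symm

/-- Up to `3 ε / 4` such a set is determined by its first `N + 1` coordinates, which range over
a bounded subset of a proper space. -/
theorem lp.totallyBounded_of_forall_dist_le {E : Type*} [NormedAddCommGroup E] [ProperSpace E]
    {S : Set (lp (fun _ : ℕ => E) ∞)} (hS : Bornology.IsBounded S)
    (h : ∀ ε > 0, ∃ N, ∀ x ∈ S, ∀ n ≥ N, dist (x n) (x N) ≤ ε) : TotallyBounded S := by
  rw [Metric.totallyBounded_iff]
  intro ε hε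
  obtain ⟨N, hN⟩ := h (ε / 4) (by positivity)
  let P : lp (fun _ : ℕ => E) ∞ → (Fin (N + 1) → E) := fun x i => x i
  have hP : LipschitzWith 1 P := LipschitzWith.of_dist_le_mul fun x y => by
    rw [NNReal.coe_one, one_mul, dist_pi_le_iff dist_nonneg]
    intro i
    rw [dist_eq_norm, dist_eq_norm]
    exact lp.norm_apply_le_norm ENNReal.top_ne_zero (x - y) i
  have hPS : TotallyBounded (P '' S) :=
    (hP.isBounded_image hS).isCompact_closure.totallyBounded.subset subset_closure
  obtain ⟨u, huS, hufin, hcover⟩ := Set.exists_subset_image_finite_and.1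
    (Metric.finite_approx_of_totallyBounded hPS (ε / 4) (by positivity))
  refine ⟨u, hufin, fun x hx => ?_⟩
  obtain ⟨z, hz, hxz⟩ : ∃ z ∈ u, dist (P x) (P z) < ε / 4 := by
    simpa using hcover ⟨x, hx, rfl⟩
  have hhead : ∀ i ≤ N, dist (x i) (z i) < ε / 4 := fun i hi =>
    (dist_le_pi_dist (P x) (P z) ⟨i, Nat.lt_succ_of_le hi⟩).trans_lt hxz
  refine Set.mem_biUnion hz ?_
  rw [Metric.mem_ball, dist_eq_norm]
  refine (lp.norm_le_of_forall_le (by positivity) fun i => ?_).trans_lt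
    (by linarith : 3 * (ε / 4) < ε)
  rw [lp.coeFn_sub, Pi.sub_apply, ← dist_eq_norm]
  rcases le_or_gt i N with hi | hi
  · linarith [hhead i hi]
  · calc dist (x i) (z i) ≤ dist (x i) (x N) + dist (x N) (z N) + dist (z N) (z i) :=
          dist_triangle4 _ _ _ _
      _ ≤ ε / 4 + ε / 4 + ε / 4 := by
          gcongr
          · exact hN x hx i hi.le
          · exact (hhead N le_rfl).le
          · rw [dist_comm]; exact hN z (huS hz) i hi.le
      _ = 3 * (ε / 4) := by ring

theorem stmt13 (A : ℕ → ℕ → ℝ)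
    (ha : ∀ n k : ℕ, Summable fun j : ℕ => |fibr (k + j + 1) ^ 2 / (fibr k * fibr (k + 1)) * A n (k + j)|)
    (hrow : ∀ n : ℕ, Summable fun k : ℕ => |abar (A n) k|)
    (L : ellF ∞ →L[ℝ] lp (fun _ : ℕ => ℝ) ∞)
    (hrep : ∀ x : ellF ∞, ∀ n : ℕ, (L x : ℕ → ℝ) n = ∑' k : ℕ, A n k * (x : ℕ → ℝ) k)
    (hconv : ∀ x : ellF ∞, ∃ l : ℝ, Tendsto (fun n : ℕ => (L x : ℕ → ℝ) n) atTop (𝓝 l)) :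
    ∀ s : Set (ellF ∞), Bornology.IsBounded s → TotallyBounded (⇑L '' s) := by
  intro s hs
  have hL : ∀ (x : ellF ∞) n, (L x : ℕ → ℝ) n = ∑' k, abar (A n) k * Fhat (x : ℕ → ℝ) k :=
    fun x n => by
      rw [hrep, ← tsum_mul_FhatInv (by simpa [fibr, abs_mul] using ha n 0) (abs_Fhat_le_norm x)]
      exact congrArg (fun z => ∑' k, A n k * z k) (FhatInv_Fhat _).symm
  have hcauchy := tendsto_tsum_abs_sub_of_forall_exists_tendsto hrow fun y hy => by
    have hmem : FhatInv y ∈ ellF ∞ :=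
      FhatInv_mem_ellF (memℓp_infty ⟨1, by rintro _ ⟨k, rfl⟩; exact hy k⟩)
    obtain ⟨l, hl⟩ := hconv ⟨_, hmem⟩
    refine ⟨l, hl.congr fun n => ?_⟩
    rw [hL]
    exact congrArg (fun z => ∑' k, abar (A n) k * z k) (Fhat_FhatInv y)
  obtain ⟨R, hR, hsR⟩ := hs.exists_pos_norm_le
  refine lp.totallyBounded_of_forall_dist_le (L.lipschitz.isBounded_image hs) fun ε hε => ?_
  obtain ⟨N, hN⟩ := eventually_atTop_prod_self'.1 (hcauchy.eventually (gt_mem_nhds (div_pos hε hR)))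
  refine ⟨N, ?_⟩
  rintro _ ⟨x, hx, rfl⟩ n hn
  have hFx := abs_Fhat_le_norm x
  rw [Real.dist_eq, hL, hL, ← (summable_mul_of_abs_le (hrow n) hFx).tsum_sub
    (summable_mul_of_abs_le (hrow N) hFx)]
  simp_rw [← sub_mul]
  calc _ ≤ (∑' k, |abar (A n) k - abar (A N) k|) * ‖x‖ :=
        abs_tsum_mul_le (summable_abs_sub (hrow n) (hrow N)) hFx
    _ ≤ ε / R * R := mul_le_mul (hN n hn N le_rfl).le (hsR x hx) (norm_nonneg _) (by positivity)
    _ = ε := div_mul_cancel₀ _ hR.ne'
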